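/- Assume θ > 0, λ₁, λ₂, μ > 0, ϱ₁ = λ₁/μ < 1 and ϱ = (λ₁ + λ₂)/μ ≥ 1. Then there is no pair (λ_net, π) with λ_net ≥ 0 and π a stationary distribution of the free chain with parameters (λ₁, λ₂ + λ_net, μ, θ) such that Σ_{x∈ℕ²} x₂·π(x) < ∞ and λ_net = θ·Σ_{x∈ℕ²} x₂·π(x). -/

import Mathlib

open Filter Topology

/-- `π` is a stationary distribution of the free chain with parameters
`(l1, lt, mu, th)` (arrival rates `l1`, `lt`, service rate `mu`, mobility rate `th`). -/
def IsStationaryFree (l1 lt mu th : ℝ) (π : ℕ × ℕ → ℝ) : Prop :=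
  (∀ x, 0 ≤ π x) ∧ HasSum π 1 ∧
    ∀ x1 x2 : ℕ,
      π (x1, x2) * (l1 + lt + (if (x1, x2) ≠ ((0 : ℕ), (0 : ℕ)) then mu else 0)
          + th * (x2 : ℝ))
        = l1 * (if 1 ≤ x1 then π (x1 - 1, x2) else 0)
          + lt * (if 1 ≤ x2 then π (x1, x2 - 1) else 0)
          + mu * ((x1 : ℝ) + 1) / ((x1 : ℝ) + 1 + (x2 : ℝ)) * π (x1 + 1, x2)
          + (mu * ((x2 : ℝ) + 1) / ((x1 : ℝ) + (x2 : ℝ) + 1) + th * ((x2 : ℝ) + 1))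
              * π (x1, x2 + 1)

/-!
Summing the global balance equations over the level `x₁ + x₂ = n` and inducting on `n` gives
the flux balance across the cut between consecutive levels,
`(λ₁ + λ_tot) P n = μ P (n + 1) + θ S (n + 1)`, where `P n` is the mass of level `n` and `S n`
its mass weighted by `x₂`. Summing over `n` gives `λ₁ + λ_tot = μ (1 - π (0, 0)) + θ ∑ x₂ π x`.
At a fixed point `λ_tot = λ₂ + θ ∑ x₂ π x`, hence `λ₁ + λ₂ = μ (1 - π (0, 0)) < μ`: the origin
is charged, since otherwise the cut balances empty every level in turn.
-/

open Finset

theorem HasSum.sum_antidiagonal {A α : Type*} [AddCommMonoid A] [HasAntidiagonal A]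
    [AddCommMonoid α] [TopologicalSpace α] [ContinuousAdd α] [RegularSpace α]
    {f : A × A → α} {a : α}
    (hf : HasSum f a) : HasSum (fun n ↦ ∑ x ∈ antidiagonal n, f x) a :=
  (HasAntidiagonal.sigmaAntidiagonalEquivProd.hasSum_iff.2 hf).sigma fun n ↦
    (antidiagonal n).hasSum f

namespace Finset.Nat

variable {M R : Type*} [AddCommMonoid M] [Semiring R]

theorem sum_antidiagonal_succ_ite_fst (f : ℕ × ℕ → M) (n : ℕ) :
    ∑ p ∈ antidiagonal (n + 1), (if 1 ≤ p.1 then f (p.1 - 1, p.2) else 0) =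
      ∑ p ∈ antidiagonal n, f p := by
  simp [sum_antidiagonal_succ]

theorem sum_antidiagonal_succ_ite_snd (f : ℕ × ℕ → M) (n : ℕ) :
    ∑ p ∈ antidiagonal (n + 1), (if 1 ≤ p.2 then f (p.1, p.2 - 1) else 0) =
      ∑ p ∈ antidiagonal n, f p := by
  simp [sum_antidiagonal_succ']

theorem sum_antidiagonal_succ_mul_fst (f : ℕ × ℕ → R) (n : ℕ) :
    ∑ p ∈ antidiagonal n, ((p.1 : R) + 1) * f (p.1 + 1, p.2) =
      ∑ p ∈ antidiagonal (n + 1), (p.1 : R) * f p := by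
  simp [sum_antidiagonal_succ]

theorem sum_antidiagonal_succ_mul_snd (f : ℕ × ℕ → R) (n : ℕ) :
    ∑ p ∈ antidiagonal n, ((p.2 : R) + 1) * f (p.1, p.2 + 1) =
      ∑ p ∈ antidiagonal (n + 1), (p.2 : R) * f p := by
  simp [sum_antidiagonal_succ']

end Finset.Nat

namespace IsStationaryFree

variable {l1 lt mu th : ℝ} {π : ℕ × ℕ → ℝ}

theorem sum_antidiagonal_balance (h : IsStationaryFree l1 lt mu th π) (m : ℕ) :
    ∑ p ∈ antidiagonal m, π p * (l1 + lt + (if p ≠ (0, 0) then mu else 0) + th * p.2) =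
      l1 * ∑ p ∈ antidiagonal m, (if 1 ≤ p.1 then π (p.1 - 1, p.2) else 0)
        + lt * ∑ p ∈ antidiagonal m, (if 1 ≤ p.2 then π (p.1, p.2 - 1) else 0)
        + mu * ∑ p ∈ antidiagonal (m + 1), π p
        + th * ∑ p ∈ antidiagonal (m + 1), (p.2 : ℝ) * π p := by
  have hm : ((m : ℝ) + 1) ≠ 0 := by positivity
  -- on level `m` both service denominators equal `m + 1`
  have hbal : ∀ p ∈ antidiagonal m,
      π p * (l1 + lt + (if p ≠ (0, 0) then mu else 0) + th * p.2) =
        l1 * (if 1 ≤ p.1 then π (p.1 - 1, p.2) else 0)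
          + lt * (if 1 ≤ p.2 then π (p.1, p.2 - 1) else 0)
          + mu / (m + 1) * (((p.1 : ℝ) + 1) * π (p.1 + 1, p.2))
          + mu / (m + 1) * (((p.2 : ℝ) + 1) * π (p.1, p.2 + 1))
          + th * (((p.2 : ℝ) + 1) * π (p.1, p.2 + 1)) := by
    rintro ⟨a, b⟩ hab
    have hab : (a : ℝ) + b = m := by exact_mod_cast mem_antidiagonal.mp hab
    rw [h.2.2 a b, show (a : ℝ) + 1 + b = m + 1 by linarith,
      show (a : ℝ) + b + 1 = m + 1 by linarith]
    ring
  have hservice : mu / (m + 1) * ∑ p ∈ antidiagonal (m + 1), (p.1 : ℝ) * π p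
      + mu / (m + 1) * ∑ p ∈ antidiagonal (m + 1), (p.2 : ℝ) * π p =
        mu * ∑ p ∈ antidiagonal (m + 1), π p := by
    rw [← mul_add, ← sum_add_distrib, mul_sum, mul_sum]
    refine sum_congr rfl fun p hp ↦ ?_
    rw [← add_mul, ← Nat.cast_add, mem_antidiagonal.mp hp]
    field_simp
    push_cast
    ring
  rw [sum_congr rfl hbal]
  simp only [sum_add_distrib, ← mul_sum, Nat.sum_antidiagonal_succ_mul_fst,
    Nat.sum_antidiagonal_succ_mul_snd]
  linear_combination hservice

theorem cut_balance (h : IsStationaryFree l1 lt mu th π) (n : ℕ) :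
    (l1 + lt) * ∑ p ∈ antidiagonal n, π p =
      mu * ∑ p ∈ antidiagonal (n + 1), π p
        + th * ∑ p ∈ antidiagonal (n + 1), (p.2 : ℝ) * π p := by
  induction n with
  | zero => simpa [mul_comm] using h.sum_antidiagonal_balance 0
  | succ n ih =>
    have hlevel := h.sum_antidiagonal_balance (n + 1)
    have hout : ∑ p ∈ antidiagonal (n + 1),
          π p * (l1 + lt + (if p ≠ (0, 0) then mu else 0) + th * p.2) =
        (l1 + lt + mu) * ∑ p ∈ antidiagonal (n + 1), π p
          + th * ∑ p ∈ antidiagonal (n + 1), (p.2 : ℝ) * π p := by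
      rw [mul_sum, mul_sum, ← sum_add_distrib]
      refine sum_congr rfl fun p hp ↦ ?_
      rw [if_pos (by rintro rfl; simp at hp)]
      ring
    rw [hout, Nat.sum_antidiagonal_succ_ite_fst, Nat.sum_antidiagonal_succ_ite_snd] at hlevel
    linarith

theorem origin_pos (h : IsStationaryFree l1 lt mu th π) (hmu : 0 < mu) (hth : 0 ≤ th) :
    0 < π (0, 0) := by
  refine (h.1 _).lt_of_ne' fun h0 ↦ ?_
  have hlevel : ∀ n, ∑ p ∈ antidiagonal n, π p = 0 := by
    intro n
    induction n with
    | zero => simpa using h0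
    | succ n ih =>
      have hcut := h.cut_balance n
      have hmass : 0 ≤ ∑ p ∈ antidiagonal (n + 1), π p := sum_nonneg fun p _ ↦ h.1 p
      have hmoment : 0 ≤ ∑ p ∈ antidiagonal (n + 1), (p.2 : ℝ) * π p :=
        sum_nonneg fun p _ ↦ mul_nonneg p.2.cast_nonneg (h.1 p)
      rw [ih, mul_zero] at hcut
      nlinarith [mul_nonneg hth hmoment]
  have h1 := h.2.1.sum_antidiagonal
  simp only [hlevel] at h1
  exact one_ne_zero (h1.unique hasSum_zero)

theorem flux_balance (h : IsStationaryFree l1 lt mu th π)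
    (hS : Summable fun x : ℕ × ℕ ↦ (x.2 : ℝ) * π x) :
    l1 + lt = mu * (1 - π (0, 0)) + th * ∑' x : ℕ × ℕ, (x.2 : ℝ) * π x := by
  have hmass := (hasSum_nat_add_iff' 1).2 h.2.1.sum_antidiagonal
  have hmoment := (hasSum_nat_add_iff' 1).2 hS.hasSum.sum_antidiagonal
  simp only [range_one, sum_singleton, Nat.antidiagonal_zero, Nat.cast_zero, zero_mul,
    sub_zero] at hmass hmoment
  have hcut := (hmass.mul_left mu).add (hmoment.mul_left th)
  simp only [← h.cut_balance] at hcut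
  simpa using (h.2.1.sum_antidiagonal.mul_left (l1 + lt)).unique hcut

end IsStationaryFree

theorem no_fixed_point_solution_supercritical_general
    (l1 l2 mu th : ℝ) (hmu : 0 < mu) (hth : 0 < th)
    (hρ : 1 ≤ (l1 + l2) / mu) :
    ¬ ∃ (lnet : ℝ) (π : ℕ × ℕ → ℝ),
        0 ≤ lnet ∧ IsStationaryFree l1 (l2 + lnet) mu th π ∧
        Summable (fun x : ℕ × ℕ => (x.2 : ℝ) * π x) ∧
        lnet = th * ∑' x : ℕ × ℕ, (x.2 : ℝ) * π x := by
  rintro ⟨lnet, π, -, hπ, hS, hfix⟩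
  have hflux := hπ.flux_balance hS
  have horigin := hπ.origin_pos hmu hth.le
  have hload : mu ≤ l1 + l2 := (one_le_div hmu).mp hρ
  nlinarith [mul_pos hmu horigin]

/-- Lemma 2.2 (no solution): if ϱ₁ < 1 but ϱ ≥ 1 there is no pair (λ_net, π)
solving the fixed-point equation. -/
theorem no_fixed_point_solution_supercritical
    (l1 l2 mu th : ℝ) (hl1 : 0 < l1) (hl2 : 0 < l2) (hmu : 0 < mu) (hth : 0 < th)
    (hρ1 : l1 / mu < 1) (hρ : 1 ≤ (l1 + l2) / mu) :
    ¬ ∃ (lnet : ℝ) (π : ℕ × ℕ → ℝ),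
        0 ≤ lnet ∧ IsStationaryFree l1 (l2 + lnet) mu th π ∧
        Summable (fun x : ℕ × ℕ => (x.2 : ℝ) * π x) ∧
        lnet = th * ∑' x : ℕ × ℕ, (x.2 : ℝ) * π x :=
  no_fixed_point_solution_supercritical_general l1 l2 mu th hmu hth hρ
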